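/- Every rainbow Ramsey ultrafilter is nowhere dense. That is, let U be a nonprincipal ultrafilter on ℕ such that for every 2-bounded coloring χ : [ℕ]² → ℕ there is A ∈ U polychromatic for χ. Then for every function f : ℕ → ℚ there is A ∈ U such that the image f(A) is nowhere dense in ℚ. -/

import Mathlib

/-- `Y` is polychromatic for the coloring `χ`, given as a function on ordered pairs `a < b`. -/
def Polychromatic (χ : ℕ → ℕ → ℕ) (Y : Set ℕ) : Prop :=
  ∀ a b c d : ℕ, a ∈ Y → b ∈ Y → c ∈ Y → d ∈ Y → a < b → c < d →
    χ a b = χ c d → a = c ∧ b = d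

/-- `χ` is 2-bounded: every color is received by at most two pairs. -/
def TwoBounded (χ : ℕ → ℕ → ℕ) : Prop :=
  ∀ c : ℕ, {p : ℕ × ℕ | p.1 < p.2 ∧ χ p.1 p.2 = c}.encard ≤ 2

/-!
Label the nodes of the dyadic tree of `ℚ` by pairs `s < t` so that the labels along any branch
are pairwise disjoint, while below every node each pair avoiding the finitely many numbers used
on the way down labels some node. Colour `{s, v}` and `{t, v}` alike whenever `(s, t)` labels a
dyadic cell containing `f v`: since the cells containing a point form a branch, the pairs matched
at `v` are disjoint and the colouring is 2-bounded. If `A` is polychromatic and infinite, any open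
set contains a cell, `A` contains `s < t` avoiding the labels above that cell, and some subcell is
labelled `(s, t)`; no `v > t` in `A` has `f v` in that subcell, so `f '' A` meets it in a finite
set.
-/

open Set Topology

theorem isNowhereDense_of_forall_exists_inter_finite {X : Type*} [TopologicalSpace X]
    [T1Space X] [PerfectSpace X] {s : Set X}
    (h : ∀ U, IsOpen U → U.Nonempty →
      ∃ V ⊆ U, IsOpen V ∧ V.Nonempty ∧ (V ∩ s).Finite) :
    IsNowhereDense s := by
  rw [IsNowhereDense, ← not_nonempty_iff_eq_empty]
  intro hne
  obtain ⟨V, hVU, hVo, ⟨x, hx⟩, hfin⟩ := h _ isOpen_interior hne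
  obtain ⟨y, hy⟩ := ((infinite_of_mem_nhds x (hVo.mem_nhds hx)).sdiff hfin).nonempty
  obtain ⟨z, hz, hzs⟩ := mem_closure_iff.1 (interior_subset (hVU hy.1)) _
    (hVo.sdiff hfin.isClosed) hy
  exact hz.2 ⟨hz.1, hzs⟩

theorem exists_twoBounded_of_matching (M : ℕ → ℕ × ℕ → Prop)
    (hlt : ∀ v p, M v p → p.1 < p.2)
    (hM : ∀ v p q, M v p → M v q →
      (p.1 = q.1 ∨ p.1 = q.2 ∨ p.2 = q.1 ∨ p.2 = q.2) → p = q) :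
    ∃ χ : ℕ → ℕ → ℕ, TwoBounded χ ∧ ∀ v p, M v p → χ p.1 v = χ p.2 v := by
  classical
  -- `{a, v}` gets the colour `(v, s)`, where `(s, a)` is matched at `v`, or `(v, a)` if none is
  let rep (v a : ℕ) : ℕ := if h : ∃ s, M v (s, a) then h.choose else a
  refine ⟨fun a v => Nat.pair v (rep v a), fun c => ?_, fun v p hp => ?_⟩
  · have hsub : {p : ℕ × ℕ | p.1 < p.2 ∧ Nat.pair p.2 (rep p.2 p.1) = c} ⊆
        insert (c.unpair.2, c.unpair.1)
          {p | p.2 = c.unpair.1 ∧ M p.2 (c.unpair.2, p.1)} := by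
      rintro ⟨a, v⟩ ⟨-, rfl⟩
      simp only [Nat.unpair_pair, mem_insert_iff, mem_ofPred_eq, Prod.mk.injEq, true_and, rep]
      by_cases h : ∃ s, M v (s, a)
      · exact Or.inr (by simpa only [dif_pos h] using h.choose_spec)
      · exact Or.inl (by simp [dif_neg h])
    have hsingle :
        {p : ℕ × ℕ | p.2 = c.unpair.1 ∧ M p.2 (c.unpair.2, p.1)}.encard ≤ 1 := by
      rw [encard_le_one_iff]
      rintro ⟨a, v⟩ ⟨b, w⟩ ⟨rfl, ha⟩ ⟨rfl, hb⟩
      have := hM _ _ _ ha hb (Or.inl rfl)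
      simp_all
    calc _ ≤ _ := encard_mono hsub
      _ ≤ _ + 1 := encard_insert_le _ _
      _ ≤ 1 + 1 := by gcongr
      _ = 2 := one_add_one_eq_two
  · have hrep₁ : rep v p.1 = p.1 := dif_neg fun ⟨s, hs⟩ =>
      (hlt v p hp).ne (congrArg Prod.snd (hM v _ _ hs hp (by simp)))
    have hex : ∃ s, M v (s, p.2) := ⟨p.1, hp⟩
    have hrep₂ : rep v p.2 = p.1 := by
      simp only [rep, dif_pos hex]
      exact congrArg Prod.fst (hM v _ _ hex.choose_spec hp (by simp))
    simp only [hrep₁, hrep₂]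

namespace RainbowRamsey

/- A node of the dyadic tree is the list of its bits, deepest first, so the descendants of `σ` are
the `ρ ++ σ`. Going down, a `true` increments `counter` and a `false` node is labelled by the pair
coded by `counter`, provided it is new on the path. Every `j` with `j.unpair.1 = Nat.pair s t`
codes `(s, t)`, so below any node some code exceeds the current counter. -/
def candidate (W : Finset ℕ) (j : ℕ) : Option (ℕ × ℕ) :=
  let p := j.unpair.1.unpair
  if p.1 < p.2 ∧ p.1 ∉ W ∧ p.2 ∉ W then some p else none

def counter : List Bool → ℕ
  | true :: σ => counter σ + 1
  | _ => 0

def used : List Bool → Finset ℕ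
  | [] => ∅
  | true :: σ => used σ
  | false :: σ =>
    match candidate (used σ) (counter σ) with
    | some p => insert p.1 (insert p.2 (used σ))
    | none => used σ

def label : List Bool → Option (ℕ × ℕ)
  | false :: σ => candidate (used σ) (counter σ)
  | _ => none

lemma label_eq_some {σ : List Bool} {p : ℕ × ℕ} (h : label σ = some p) :
    p.1 < p.2 ∧ p.1 ∉ used σ.tail ∧ p.2 ∉ used σ.tail := by
  match σ, h with
  | false :: σ, h =>
    simp only [label, candidate] at h
    split_ifs at h with hp
    cases h
    exact hp

lemma mem_used_of_label_eq_some {σ : List Bool} {p : ℕ × ℕ} (h : label σ = some p) :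
    p.1 ∈ used σ ∧ p.2 ∈ used σ := by
  match σ, h with
  | false :: σ, h =>
    simp only [label] at h
    simp [used, h]

lemma used_subset_cons (b : Bool) (σ : List Bool) : used σ ⊆ used (b :: σ) := by
  cases b
  · simp only [used]
    split
    · exact (Finset.subset_insert _ _).trans (Finset.subset_insert _ _)
    · rfl
  · rfl

lemma used_subset_of_suffix {σ τ : List Bool} (h : σ <:+ τ) : used σ ⊆ used τ := by
  induction τ with
  | nil => rw [List.suffix_nil.mp h]
  | cons b τ ih =>
    rcases List.suffix_cons_iff.mp h with rfl | h
    · rfl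
    · exact (ih h).trans (used_subset_cons b τ)

lemma label_eq_of_suffix {σ τ : List Bool} {p q : ℕ × ℕ} (h : σ <:+ τ)
    (hp : label σ = some p) (hq : label τ = some q)
    (hpq : p.1 = q.1 ∨ p.1 = q.2 ∨ p.2 = q.1 ∨ p.2 = q.2) : p = q := by
  cases τ with
  | nil => simp [label] at hq
  | cons b τ =>
    rcases List.suffix_cons_iff.mp h with rfl | h
    · exact Option.some_injective _ (hp.symm.trans hq)
    · have hsub := used_subset_of_suffix h
      obtain ⟨hp₁, hp₂⟩ := mem_used_of_label_eq_some hp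
      obtain ⟨-, hq₁, hq₂⟩ := label_eq_some hq
      have h₁ := hsub hp₁
      have h₂ := hsub hp₂
      simp only [List.tail_cons] at hq₁ hq₂
      exfalso
      grind

lemma used_counter_replicate_true_append (m : ℕ) (σ : List Bool) :
    used (List.replicate m true ++ σ) = used σ ∧
      counter (List.replicate m true ++ σ) = counter σ + m := by
  induction m with
  | zero => simp
  | succ m ih => simp [List.replicate_succ, used, counter, ih, add_assoc]

lemma exists_label_eq {σ : List Bool} {s t : ℕ} (hst : s < t) (hs : s ∉ used σ)
    (ht : t ∉ used σ) : ∃ ρ, label (ρ ++ σ) = some (s, t) := by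
  set j := Nat.pair (Nat.pair s t) (counter σ)
  obtain ⟨hu, hc⟩ := used_counter_replicate_true_append (j - counter σ) σ
  refine ⟨false :: List.replicate (j - counter σ) true, ?_⟩
  rw [List.cons_append, label, hu, hc, Nat.add_sub_cancel' (Nat.right_le_pair _ _)]
  simp [candidate, hst, hs, ht]

/- `cell k σ` is `[m / 2 ^ n, (m + 1) / 2 ^ n)` for `n = σ.length`, `m = dyadicIndex k σ`: the
dyadic interval reached from `[k, k + 1)` along `σ`. -/
def dyadicIndex (k : ℤ) : List Bool → ℤ
  | [] => k
  | b :: σ => 2 * dyadicIndex k σ + b.toNat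

def cell (k : ℤ) (σ : List Bool) : Set ℚ :=
  {q | ⌊q * 2 ^ σ.length⌋ = dyadicIndex k σ}

lemma cell_cons_subset (k : ℤ) (b : Bool) (σ : List Bool) : cell k (b :: σ) ⊆ cell k σ := by
  intro q hq
  simp only [cell, mem_ofPred_eq, List.length_cons, dyadicIndex, Int.floor_eq_iff, pow_succ]
    at hq ⊢
  cases b <;> simp only [Bool.toNat_false, Bool.toNat_true] at hq <;> push_cast at hq <;>
    constructor <;> linarith

lemma cell_subset_of_suffix (k : ℤ) {σ τ : List Bool} (h : σ <:+ τ) :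
    cell k τ ⊆ cell k σ := by
  induction τ with
  | nil => rw [List.suffix_nil.mp h]
  | cons b τ ih =>
    rcases List.suffix_cons_iff.mp h with rfl | h
    · rfl
    · exact (cell_cons_subset k b τ).trans (ih h)

lemma eq_of_dyadicIndex_eq {k k' : ℤ} {σ τ : List Bool} (hlen : σ.length = τ.length)
    (h : dyadicIndex k σ = dyadicIndex k' τ) : σ = τ := by
  induction σ generalizing τ with
  | nil => exact (List.length_eq_zero_iff.mp hlen.symm).symm
  | cons b σ ih =>
    obtain _ | ⟨c, τ⟩ := τ
    · simp at hlen
    · simp only [dyadicIndex] at h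
      have hbc : b = c ∧ dyadicIndex k σ = dyadicIndex k' τ := by
        cases b <;> cases c <;> simp only [Bool.toNat_false, Bool.toNat_true] at h <;>
          first | exact ⟨rfl, by omega⟩ | omega
      exact congrArg₂ _ hbc.1 (ih (by simpa using hlen) hbc.2)

lemma suffix_of_mem_cell {q : ℚ} {k k' : ℤ} {σ τ : List Bool} (hσ : q ∈ cell k σ)
    (hτ : q ∈ cell k' τ) (hle : σ.length ≤ τ.length) : σ <:+ τ := by
  set ρ := τ.drop (τ.length - σ.length)
  have hρ : q ∈ cell k' ρ := cell_subset_of_suffix k' (List.drop_suffix _ _) hτ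
  have hlen : ρ.length = σ.length := by simp [ρ]; omega
  simp only [cell, mem_ofPred_eq, hlen] at hρ
  rw [eq_of_dyadicIndex_eq hlen.symm (hσ.symm.trans hρ)]
  exact List.drop_suffix _ _

lemma exists_dyadicIndex_eq (n : ℕ) (m : ℤ) :
    ∃ k σ, σ.length = n ∧ dyadicIndex k σ = m := by
  induction n generalizing m with
  | zero => exact ⟨m, [], rfl, rfl⟩
  | succ n ih =>
    obtain ⟨k, σ, hlen, hidx⟩ := ih (m / 2)
    refine ⟨k, decide (m % 2 = 1) :: σ, by simp [hlen], ?_⟩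
    rcases Int.emod_two_eq_zero_or_one m with h | h <;> simp [dyadicIndex, hidx, h] <;> omega

lemma exists_mem_cell (q : ℚ) (n : ℕ) : ∃ k σ, σ.length = n ∧ q ∈ cell k σ := by
  obtain ⟨k, σ, hlen, hidx⟩ := exists_dyadicIndex_eq n ⌊q * 2 ^ n⌋
  exact ⟨k, σ, hlen, by simp [cell, hlen, hidx]⟩

lemma abs_sub_lt_of_mem_cell {x y : ℚ} {k : ℤ} {σ : List Bool} (hx : x ∈ cell k σ)
    (hy : y ∈ cell k σ) : |x - y| < 1 / 2 ^ σ.length := by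
  have h := Int.abs_sub_lt_one_of_floor_eq_floor (hx.trans hy.symm)
  rw [← sub_mul, abs_mul, abs_of_pos (by positivity : (0 : ℚ) < 2 ^ σ.length)] at h
  rwa [lt_div_iff₀ (by positivity)]

lemma exists_cell_subset_of_mem_nhds {q : ℚ} {U : Set ℚ} (h : U ∈ 𝓝 q) :
    ∃ k σ, cell k σ ⊆ U := by
  obtain ⟨l, u, ⟨hl, hu⟩, hsub⟩ := mem_nhds_iff_exists_Ioo_subset.mp h
  obtain ⟨n, hn⟩ := exists_pow_lt_of_lt_one (lt_min (sub_pos.2 hl) (sub_pos.2 hu))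
    (by norm_num : (1 / 2 : ℚ) < 1)
  obtain ⟨k, σ, hlen, hq⟩ := exists_mem_cell q n
  refine ⟨k, σ, fun x hx => hsub ?_⟩
  have hxq := abs_sub_lt_of_mem_cell hx hq
  rw [hlen, ← one_div_pow, abs_sub_lt_iff] at hxq
  constructor <;> linarith [min_le_left (q - l) (u - q), min_le_right (q - l) (u - q)]

lemma exists_isOpen_subset_cell (k : ℤ) (σ : List Bool) :
    ∃ V, IsOpen V ∧ V.Nonempty ∧ V ⊆ cell k σ := by
  have h2 : (0 : ℚ) < 2 ^ σ.length := by positivity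
  refine ⟨Ioo (dyadicIndex k σ / 2 ^ σ.length) ((dyadicIndex k σ + 1) / 2 ^ σ.length),
    isOpen_Ioo, nonempty_Ioo.2 (by gcongr; linarith), fun x ⟨hl, hu⟩ => ?_⟩
  rw [div_lt_iff₀ h2] at hl
  rw [lt_div_iff₀ h2] at hu
  exact Int.floor_eq_iff.2 ⟨hl.le, hu⟩

def IsLabelAt (q : ℚ) (p : ℕ × ℕ) : Prop :=
  ∃ k σ, q ∈ cell k σ ∧ label σ = some p

lemma IsLabelAt.fst_lt {q : ℚ} {p : ℕ × ℕ} (h : IsLabelAt q p) : p.1 < p.2 := by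
  obtain ⟨k, σ, -, hσ⟩ := h
  exact (label_eq_some hσ).1

lemma IsLabelAt.eq {x : ℚ} {p q : ℕ × ℕ} (hp : IsLabelAt x p) (hq : IsLabelAt x q)
    (hpq : p.1 = q.1 ∨ p.1 = q.2 ∨ p.2 = q.1 ∨ p.2 = q.2) : p = q := by
  obtain ⟨k, σ, hσ, hσp⟩ := hp
  obtain ⟨k', τ, hτ, hτq⟩ := hq
  rcases le_total σ.length τ.length with hle | hle
  · exact label_eq_of_suffix (suffix_of_mem_cell hσ hτ hle) hσp hτq hpq
  · exact (label_eq_of_suffix (suffix_of_mem_cell hτ hσ hle) hτq hσp (by omega)).symm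

section

variable {f : ℕ → ℚ} {χ : ℕ → ℕ → ℕ} {A : Set ℕ}

lemma exists_isOpen_subset_inter_image_finite
    (hχ : ∀ v p, IsLabelAt (f v) p → χ p.1 v = χ p.2 v) (hA : Polychromatic χ A)
    (hAinf : A.Infinite) {U : Set ℚ} (hU : IsOpen U) (hne : U.Nonempty) :
    ∃ V ⊆ U, IsOpen V ∧ V.Nonempty ∧ (V ∩ f '' A).Finite := by
  obtain ⟨q, hq⟩ := hne
  obtain ⟨k, σ, hσU⟩ := exists_cell_subset_of_mem_nhds (hU.mem_nhds hq)
  have hfresh : (A \ used σ).Infinite := hAinf.sdiff (used σ).finite_toSet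
  obtain ⟨s, ⟨hsA, hs⟩⟩ := hfresh.nonempty
  obtain ⟨t, ⟨htA, ht⟩, hst⟩ := hfresh.exists_gt s
  obtain ⟨ρ, hρ⟩ := exists_label_eq hst hs ht
  obtain ⟨V, hVo, hVne, hV⟩ := exists_isOpen_subset_cell k (ρ ++ σ)
  refine ⟨V, hV.trans ((cell_subset_of_suffix k (List.suffix_append ρ σ)).trans hσU),
    hVo, hVne, ((finite_Iic t).image f).subset ?_⟩
  rintro _ ⟨hxV, v, hvA, rfl⟩
  refine ⟨v, mem_Iic.2 (not_lt.mp fun htv => hst.ne ?_), rfl⟩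
  exact (hA s v t v hsA hvA htA hvA (hst.trans htv) htv
    (hχ v (s, t) ⟨k, ρ ++ σ, hV hxV, hρ⟩)).1

theorem isNowhereDense_image_of_polychromatic
    (hχ : ∀ v p, IsLabelAt (f v) p → χ p.1 v = χ p.2 v) (hA : Polychromatic χ A) :
    IsNowhereDense (f '' A) := by
  refine isNowhereDense_of_forall_exists_inter_finite fun U hU hne => ?_
  by_cases hfin : A.Finite
  · exact ⟨U, subset_rfl, hU, hne, (hfin.image f).inter_of_right U⟩
  · exact exists_isOpen_subset_inter_image_finite hχ hA hfin hU hne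

end

theorem exists_twoBounded_forall_polychromatic_isNowhereDense_image (f : ℕ → ℚ) :
    ∃ χ, TwoBounded χ ∧ ∀ A, Polychromatic χ A → IsNowhereDense (f '' A) := by
  obtain ⟨χ, hχ, hχf⟩ := exists_twoBounded_of_matching (fun v => IsLabelAt (f v))
    (fun _ _ => IsLabelAt.fst_lt) (fun _ _ _ => IsLabelAt.eq)
  exact ⟨χ, hχ, fun A => isNowhereDense_image_of_polychromatic hχf⟩

end RainbowRamsey

theorem rainbowRamsey_nowhereDense_general (U : Ultrafilter ℕ)
    (hRR : ∀ χ : ℕ → ℕ → ℕ, TwoBounded χ → ∃ A ∈ U, Polychromatic χ A) :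
    ∀ f : ℕ → ℚ, ∃ A ∈ U, IsNowhereDense (f '' A) := by
  intro f
  obtain ⟨χ, hχ, hnwd⟩ :=
    RainbowRamsey.exists_twoBounded_forall_polychromatic_isNowhereDense_image f
  obtain ⟨A, hAU, hA⟩ := hRR χ hχ
  exact ⟨A, hAU, hnwd A hA⟩

/-- Every rainbow Ramsey ultrafilter is nowhere dense. -/
theorem rainbowRamsey_nowhereDense (U : Ultrafilter ℕ)
    (hU : ∀ s : Set ℕ, s.Finite → s ∉ U)
    (hRR : ∀ χ : ℕ → ℕ → ℕ, TwoBounded χ → ∃ A ∈ U, Polychromatic χ A) :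
    ∀ f : ℕ → ℚ, ∃ A ∈ U, IsNowhereDense (f '' A) :=
  rainbowRamsey_nowhereDense_general U hRR
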